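/- Let F be a field, f ∈ F[X,Y] with Newton polygon at the origin having extremes (l,0) and (0,n), 0 < n ≤ l, and write l = qn + h with 0 < h < n. Then Y^{nq} divides f(Y, X·Y^q) in F[X,Y], and the quotient f₁(X,Y) = f(Y, X·Y^q)/Y^{nq} has Newton polygon with extremes (n,0) and (0,h). -/

import Mathlib

/-!
The substitution `X ↦ Y`, `Y ↦ X·Y^q` sends `X^a Y^b` to `X^b Y^(a + q b)`. Since `l = q n + h`,
every exponent `(a, b)` on or above the segment from `(l, 0)` to `(0, n)` has `a + q b ≥ n q`, so `Y^(n q)` factors out. The coefficient of `X^a Y^b` in the quotient is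
then the coefficient of `X^(b + n q - q a) Y^a` in `f`: at `(n, 0)` and `(0, h)` these are the
extremes `(0, n)` and `(l, 0)` of `f`, while the points `(a, 0)`, `a < n`, and `(0, b)`,
`b < h`, come from points strictly below the segment or on the `X`-axis before `(l, 0)`.
-/

noncomputable def pcoeff {F : Type} [Field F] (f : MvPolynomial (Fin 2) F) (a b : ℕ) : F :=
  MvPolynomial.coeff (Finsupp.single 0 a + Finsupp.single 1 b) f

open MvPolynomial
open Finsupp (single)

lemma Fin.two_finsupp_eq_single_add_single (v : Fin 2 →₀ ℕ) :
    v = single 0 (v 0) + single 1 (v 1) := by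
  ext i; fin_cases i <;> simp

lemma coeff_eq_pcoeff {F : Type} [Field F] (f : MvPolynomial (Fin 2) F) (v : Fin 2 →₀ ℕ) :
    coeff v f = pcoeff f (v 0) (v 1) := by
  rw [pcoeff, ← Fin.two_finsupp_eq_single_add_single]

lemma mul_le_add_mul_of_mul_le_mul_add_mul {n l q h a b : ℕ} (hn : 0 < n)
    (hlq : l = q * n + h) (hseg : n * l ≤ n * a + l * b) : n * q ≤ a + q * b := by
  rcases le_or_gt b n with hb | hb
  · subst hlq
    have : n * (n * q) ≤ n * (a + q * b) := by nlinarith [Nat.mul_le_mul_left h hb]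
    exact Nat.le_of_mul_le_mul_left this hn
  · nlinarith

section QuadTransform

variable {R : Type*} [CommSemiring R] (q m : ℕ)

/-- Exponent of the monomial `X^(v 1) Y^(v 0 + q v 1 - m)`, which is `X^(v 0) Y^(v 1)` after
`X ↦ Y`, `Y ↦ X·Y^q` and division by `Y^m`. -/
noncomputable def quadTransformExp (v : Fin 2 →₀ ℕ) : Fin 2 →₀ ℕ :=
  single 0 (v 1) + single 1 (v 0 + q * v 1 - m)

/-- `f(Y, X·Y^q) / Y^m`, computed termwise: because of the truncated subtraction in
`quadTransformExp` it is the true quotient only when `m ≤ v 0 + q * v 1` on the support. -/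
noncomputable def quadTransform (f : MvPolynomial (Fin 2) R) : MvPolynomial (Fin 2) R :=
  ∑ v ∈ f.support, monomial (quadTransformExp q m v) (coeff v f)

variable {q m}

lemma quadTransformExp_injOn :
    Set.InjOn (quadTransformExp q m) {v | m ≤ v 0 + q * v 1} := by
  intro v hv w hw h
  simp only [Set.mem_ofPred_eq] at hv hw
  have h0 := congrArg (· 0) h
  have h1 := congrArg (· 1) h
  simp only [quadTransformExp, Finsupp.add_apply, Finsupp.single_apply] at h0 h1
  norm_num at h0 h1
  rw [Fin.two_finsupp_eq_single_add_single v, Fin.two_finsupp_eq_single_add_single w, h0]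
  rw [h0] at hv h1
  congr 2
  omega

lemma aeval_monomial_eq_X_pow_mul (v : Fin 2 →₀ ℕ) (c : R) (hv : m ≤ v 0 + q * v 1) :
    aeval ![X 1, X 0 * X 1 ^ q] (monomial v c : MvPolynomial (Fin 2) R) =
      X 1 ^ m * monomial (quadTransformExp q m v) c := by
  have hmono : (monomial (quadTransformExp q m v) c : MvPolynomial (Fin 2) R) =
      C c * X 0 ^ v 1 * X 1 ^ (v 0 + q * v 1 - m) := by
    rw [quadTransformExp, X_pow_eq_monomial, X_pow_eq_monomial, C_apply, monomial_mul,
      monomial_mul, zero_add, mul_one, mul_one]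
  rw [aeval_monomial, Finsupp.prod_fintype _ _ (fun i => pow_zero _), Fin.prod_univ_two, hmono]
  simp only [Matrix.cons_val_zero, Matrix.cons_val_one, algebraMap_eq,
    mul_pow, ← pow_mul]
  have hY : (X 1 : MvPolynomial (Fin 2) R) ^ v 0 * X 1 ^ (q * v 1) =
      X 1 ^ m * X 1 ^ (v 0 + q * v 1 - m) := by
    rw [← pow_add, ← pow_add, Nat.add_sub_cancel' hv]
  calc (C c : MvPolynomial (Fin 2) R) * (X 1 ^ v 0 * (X 0 ^ v 1 * X 1 ^ (q * v 1)))
      = C c * X 0 ^ v 1 * (X 1 ^ v 0 * X 1 ^ (q * v 1)) := by ring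
    _ = _ := by rw [hY]; ring

lemma aeval_eq_X_pow_mul_quadTransform (f : MvPolynomial (Fin 2) R)
    (hf : ∀ v ∈ f.support, m ≤ v 0 + q * v 1) :
    aeval ![X 1, X 0 * X 1 ^ q] f = X 1 ^ m * quadTransform q m f := by
  conv_lhs => rw [f.as_sum]
  rw [map_sum, quadTransform, Finset.mul_sum]
  exact Finset.sum_congr rfl fun v hv => aeval_monomial_eq_X_pow_mul v _ (hf v hv)

lemma coeff_quadTransformExp_quadTransform (f : MvPolynomial (Fin 2) R)
    (hf : ∀ v ∈ f.support, m ≤ v 0 + q * v 1) {w : Fin 2 →₀ ℕ} (hw : m ≤ w 0 + q * w 1) :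
    coeff (quadTransformExp q m w) (quadTransform q m f) = coeff w f := by
  classical
  rw [quadTransform, coeff_sum]
  simp only [coeff_monomial]
  rw [Finset.sum_eq_single w]
  · simp
  · intro v hv hvw
    rw [if_neg fun h => hvw (quadTransformExp_injOn (hf v hv) hw h)]
  · intro hw'
    rw [MvPolynomial.notMem_support_iff.mp hw', ite_self]

end QuadTransform

lemma pcoeff_quadTransform {F : Type} [Field F] {q m : ℕ} (f : MvPolynomial (Fin 2) F)
    (hf : ∀ v ∈ f.support, m ≤ v 0 + q * v 1) {a b : ℕ} (hab : q * a ≤ b + m) :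
    pcoeff (quadTransform q m f) a b = pcoeff f (b + m - q * a) a := by
  have hexp : quadTransformExp q m (single 0 (b + m - q * a) + single 1 a) =
      single 0 a + single 1 b := by
    rw [quadTransformExp]
    congr 2 <;> simp
    omega
  rw [pcoeff, ← hexp, coeff_quadTransformExp_quadTransform f hf (by simp; omega), pcoeff]

theorem stmt_4_general (F : Type) [Field F]
    (f : MvPolynomial (Fin 2) F)
    (l n q h : ℕ) (hn : 0 < n) (hlq : l = q * n + h) (hh : 0 < h)
    (hfl : pcoeff f l 0 ≠ 0) (hfl' : ∀ a < l, pcoeff f a 0 = 0)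
    (hfn : pcoeff f 0 n ≠ 0)
    (hseg : ∀ a b : ℕ, pcoeff f a b ≠ 0 → n * l ≤ n * a + l * b) :
    ∃ f₁ : MvPolynomial (Fin 2) F,
      MvPolynomial.aeval
          ![MvPolynomial.X 1, MvPolynomial.X 0 * MvPolynomial.X 1 ^ q] f =
        MvPolynomial.X 1 ^ (n * q) * f₁ ∧
      pcoeff f₁ n 0 ≠ 0 ∧ (∀ a < n, pcoeff f₁ a 0 = 0) ∧
      pcoeff f₁ 0 h ≠ 0 ∧ (∀ b < h, pcoeff f₁ 0 b = 0) := by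
  have hl : h + n * q = l := by rw [hlq, Nat.mul_comm, Nat.add_comm]
  have hsupp : ∀ v ∈ f.support, n * q ≤ v 0 + q * v 1 := fun v hv => by
    rw [MvPolynomial.mem_support_iff, coeff_eq_pcoeff] at hv
    exact mul_le_add_mul_of_mul_le_mul_add_mul hn hlq (hseg _ _ hv)
  refine ⟨quadTransform q (n * q) f, aeval_eq_X_pow_mul_quadTransform f hsupp, ?_, ?_, ?_, ?_⟩
  · rwa [pcoeff_quadTransform f hsupp (by lia), zero_add, Nat.mul_comm n q, Nat.sub_self]
  · intro a ha
    rw [pcoeff_quadTransform f hsupp (by nlinarith)]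
    by_contra hne
    -- `(q (n - a), a)` lies strictly below the segment, because `l > q n`
    have hbelow := hseg _ _ hne
    obtain ⟨d, rfl⟩ : ∃ d, n = a + d + 1 := ⟨n - a - 1, by lia⟩
    have hqd : 0 + (a + d + 1) * q - q * a = q * (d + 1) := by
      rw [Nat.sub_eq_of_eq_add]; ring
    rw [hqd] at hbelow
    nlinarith
  · rwa [pcoeff_quadTransform f hsupp (by lia), mul_zero, Nat.sub_zero, hl]
  · intro b hb
    rw [pcoeff_quadTransform f hsupp (by lia)]
    exact hfl' _ (by lia)

theorem stmt_4 (F : Type) [Field F]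
    (f : MvPolynomial (Fin 2) F)
    (l n q h : ℕ) (hn : 0 < n) (hnl : n ≤ l) (hlq : l = q * n + h) (hh : 0 < h) (hhn : h < n)
    (hfl : pcoeff f l 0 ≠ 0) (hfl' : ∀ a < l, pcoeff f a 0 = 0)
    (hfn : pcoeff f 0 n ≠ 0) (hfn' : ∀ b < n, pcoeff f 0 b = 0)
    (hseg : ∀ a b : ℕ, pcoeff f a b ≠ 0 → n * l ≤ n * a + l * b) :
    ∃ f₁ : MvPolynomial (Fin 2) F,
      MvPolynomial.aeval
          ![MvPolynomial.X 1, MvPolynomial.X 0 * MvPolynomial.X 1 ^ q] f =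
        MvPolynomial.X 1 ^ (n * q) * f₁ ∧
      pcoeff f₁ n 0 ≠ 0 ∧ (∀ a < n, pcoeff f₁ a 0 = 0) ∧
      pcoeff f₁ 0 h ≠ 0 ∧ (∀ b < h, pcoeff f₁ 0 b = 0) :=
  stmt_4_general F f l n q h hn hlq hh hfl hfl' hfn hseg
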